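/- Let A be a multiset of positive integers containing 1. For every n ≥ 1 and every real x ≥ 1, the derivatives satisfy 1 ≤ f_{A,n}'(x) < f_{A,n+1}'(x). -/

import Mathlib

/-! Write `S_n F = ∑_{k=1}^{n} σ_A(k) F(n-k)` (`seqConv`), so that `n f_n = x S_n f`
and, differentiating, `n f_n' = S_n f + x S_n f'`. Since `σ_A(k) ≥ 1`, telescoping gives
`S_{n+1} F ≥ S_n F + F_n` for every sequence `F` with `F 0 ≥ 0` that increases up to `n`.
Fed into the two recurrences this yields, by strong induction, first that `f_n(x)` increases
in `n` (so `f_n(x) ≥ 1`) and then `(n + 1) f_{n+1}' ≥ (n + 1) f_n' + 1`, whence `f_n'(x)`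
strictly increases and `f_1' ≥ 1`. -/

open scoped Classical

/-- Sum of those divisors of `j` that belong to the multiset of positive integers
with multiplicity function `μ`, counted with multiplicity: `σ_A(j) = ∑_{d ∣ j} d·μ(d)`. -/
noncomputable def sigmaA (μ : ℕ → ℕ) (j : ℕ) : ℕ := ∑ d ∈ Nat.divisors j, d * μ d

/-- The polynomials `f_{A,n}(x)` associated with the multiset of positive integers
with multiplicity function `μ`, defined (equivalently to the generating function
`∑ f_{A,n}(x) qⁿ = ∏_{a∈A} (1/(1-q^a))^x`) by `f_{A,0} = 1` and the recurrence
`f_{A,n}(x) = (x/n) ∑_{j=1}^{n} σ_A(j) f_{A,n-j}(x)`. -/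
noncomputable def fA (μ : ℕ → ℕ) : ℕ → ℝ → ℝ
  | 0, _ => 1
  | n + 1, x =>
      x / (n + 1) * ∑ j ∈ Finset.range (n + 1), (sigmaA μ (j + 1) : ℝ) * fA μ (n - j) x
  decreasing_by exact Nat.lt_succ_of_le (Nat.sub_le n j)

/-- `f_{A,n}(x)` for an ordinary set `A` of positive integers. -/
noncomputable def fS (A : Set ℕ) : ℕ → ℝ → ℝ := fA (fun a => if a ∈ A then 1 else 0)

open Finset

noncomputable def seqConv (s F : ℕ → ℝ) (n : ℕ) : ℝ :=
  ∑ i ∈ range n, s (n - i) * F i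

lemma le_apply_of_forall_lt_le_succ {F : ℕ → ℝ} {n : ℕ} (hF : ∀ i < n, F i ≤ F (i + 1)) :
    F 0 ≤ F n := by
  induction n with
  | zero => rfl
  | succ n ih => exact (ih fun i hi => hF i (by omega)).trans (hF n n.lt_succ_self)

/-- With weights `s k ≥ 1`, passing from `n` to `n + 1` shifts every `F i` to `F (i + 1)`,
and the increments telescope to at least `F n`. -/
lemma seqConv_add_le_seqConv_succ {s F : ℕ → ℝ} {n : ℕ} (hs : ∀ k, 1 ≤ k → 1 ≤ s k)
    (hF : ∀ i < n, F i ≤ F (i + 1)) (hF0 : 0 ≤ F 0) :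
    seqConv s F n + F n ≤ seqConv s F (n + 1) := by
  have hshift :
      seqConv s F (n + 1) = ∑ i ∈ range n, s (n - i) * F (i + 1) + s (n + 1) * F 0 := by
    rw [seqConv, sum_range_succ']
    refine congrArg₂ (· + ·) (sum_congr rfl fun i hi => ?_) rfl
    rw [show n + 1 - (i + 1) = n - i by omega]
  have hsteps :
      ∑ i ∈ range n, (F (i + 1) - F i) ≤ ∑ i ∈ range n, s (n - i) * (F (i + 1) - F i) :=
    sum_le_sum fun i hi => le_mul_of_one_le_left (sub_nonneg.2 (hF i (mem_range.1 hi)))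
      (hs _ (by have := mem_range.1 hi; omega))
  have hlast : F 0 ≤ s (n + 1) * F 0 := le_mul_of_one_le_left hF0 (hs _ n.succ_pos)
  rw [sum_range_sub (fun i => F i)] at hsteps
  simp only [mul_sub, sum_sub_distrib] at hsteps
  rw [hshift, seqConv]
  linarith

lemma seqConv_succ (s F : ℕ → ℝ) (n : ℕ) :
    seqConv s F (n + 1) = ∑ j ∈ range (n + 1), s (j + 1) * F (n - j) := by
  rw [seqConv, ← sum_range_reflect]
  refine sum_congr rfl fun j hj => ?_
  rw [show n + 1 - 1 - j = n - j by omega,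
    show n + 1 - (n - j) = j + 1 by have := mem_range.1 hj; omega]

lemma hasDerivAt_seqConv {s : ℕ → ℝ} {F : ℕ → ℝ → ℝ} {F' : ℕ → ℝ} {n : ℕ} {x : ℝ}
    (hF : ∀ i < n, HasDerivAt (F i) (F' i) x) :
    HasDerivAt (fun y => seqConv s (fun i => F i y) n) (seqConv s F' n) x :=
  HasDerivAt.fun_sum fun i hi => (hF i (mem_range.1 hi)).const_mul _

section fA

variable (μ : ℕ → ℕ)

lemma one_le_sigmaA (hμ1 : 1 ≤ μ 1) (j : ℕ) (hj : 1 ≤ j) : (1 : ℝ) ≤ sigmaA μ j := by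
  have h1 : 1 ∈ Nat.divisors j := Nat.one_mem_divisors.2 (by omega)
  exact_mod_cast hμ1.trans <| by
    simpa [sigmaA] using single_le_sum (f := fun d => d * μ d) (fun _ _ => Nat.zero_le _) h1

lemma fA_zero (x : ℝ) : fA μ 0 x = 1 := by rw [fA]

lemma natCast_mul_fA (n : ℕ) (x : ℝ) :
    n * fA μ n x = x * seqConv (fun k => sigmaA μ k) (fun i => fA μ i x) n := by
  cases n with
  | zero => simp [seqConv]
  | succ n =>
    rw [fA, seqConv_succ]
    push_cast
    field_simp

lemma differentiable_fA (n : ℕ) : Differentiable ℝ (fA μ n) := by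
  induction n using Nat.strong_induction_on with
  | _ n ih =>
    match n with
    | 0 => simp [funext (fA_zero μ)]
    | n + 1 =>
      have hfun : fA μ (n + 1) = fun y => y / (n + 1) *
          ∑ j ∈ range (n + 1), (sigmaA μ (j + 1) : ℝ) * fA μ (n - j) y := by
        funext y; rw [fA]
      rw [hfun]
      exact (differentiable_id.div_const _).mul <| Differentiable.fun_sum fun j _ =>
        (ih _ (Nat.lt_succ_of_le (Nat.sub_le n j))).const_mul _

lemma natCast_mul_deriv_fA (n : ℕ) (x : ℝ) :
    n * deriv (fA μ n) x = seqConv (fun k => sigmaA μ k) (fun i => fA μ i x) n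
      + x * seqConv (fun k => sigmaA μ k) (fun i => deriv (fA μ i) x) n := by
  have hlhs : HasDerivAt (fun y => n * fA μ n y) (n * deriv (fA μ n) x) x :=
    ((differentiable_fA μ n x).hasDerivAt).const_mul _
  have hrhs := (hasDerivAt_id x).mul <| hasDerivAt_seqConv (s := fun k => sigmaA μ k) (n := n)
    fun i _ => (differentiable_fA μ i x).hasDerivAt
  simp only [funext (natCast_mul_fA μ n)] at hlhs
  simpa using hlhs.unique hrhs

variable {μ}

lemma monotone_fA (hμ1 : 1 ≤ μ 1) {x : ℝ} (hx : 1 ≤ x) : Monotone fun n => fA μ n x := by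
  refine monotone_nat_of_le_succ fun n => ?_
  induction n using Nat.strong_induction_on with
  | _ n ih =>
    have hfn : 1 ≤ fA μ n x := fA_zero μ x ▸ le_apply_of_forall_lt_le_succ ih
    have hconv := seqConv_add_le_seqConv_succ (one_le_sigmaA μ hμ1) ih (by simp [fA_zero])
    have hn := natCast_mul_fA μ n x
    have hn1 := natCast_mul_fA μ (n + 1) x
    push_cast at hn1
    -- `(n + 1) f_{n+1} = x S_{n+1} ≥ x (S_n + f_n) = n f_n + x f_n ≥ (n + 1) f_n`
    nlinarith

lemma deriv_fA_zero (x : ℝ) : deriv (fA μ 0) x = 0 := by simp [funext (fA_zero μ)]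

lemma deriv_fA_succ_bound (hμ1 : 1 ≤ μ 1) {x : ℝ} (hx : 1 ≤ x) (n : ℕ) :
    (n + 1) * deriv (fA μ n) x + 1 ≤ (n + 1) * deriv (fA μ (n + 1)) x := by
  induction n using Nat.strong_induction_on with
  | _ n ih =>
    have hstep : ∀ i < n, deriv (fA μ i) x ≤ deriv (fA μ (i + 1)) x := fun i hi =>
      (lt_of_mul_lt_mul_left (by linarith [ih i hi]) (by positivity : (0 : ℝ) ≤ i + 1)).le
    have hgn : 0 ≤ deriv (fA μ n) x := deriv_fA_zero x ▸ le_apply_of_forall_lt_le_succ hstep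
    have hfn : 1 ≤ fA μ n x := fA_zero μ x ▸ monotone_fA hμ1 hx (Nat.zero_le n)
    have hf := seqConv_add_le_seqConv_succ (n := n) (one_le_sigmaA μ hμ1)
      (fun i _ => monotone_fA hμ1 hx i.le_succ) (by simp [fA_zero])
    have hg := seqConv_add_le_seqConv_succ (one_le_sigmaA μ hμ1) hstep (deriv_fA_zero x).ge
    have hn := natCast_mul_deriv_fA μ n x
    have hn1 := natCast_mul_deriv_fA μ (n + 1) x
    push_cast at hn1
    -- `(n + 1) f'_{n+1} ≥ (S_n f + f_n) + x (S_n f' + f'_n) = n f'_n + f_n + x f'_n`,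
    -- and `f_n ≥ 1`, `x f'_n ≥ f'_n`
    nlinarith

lemma strictMono_deriv_fA (hμ1 : 1 ≤ μ 1) {x : ℝ} (hx : 1 ≤ x) :
    StrictMono fun n => deriv (fA μ n) x :=
  strictMono_nat_of_lt_succ fun n => lt_of_mul_lt_mul_left
    (by linarith [deriv_fA_succ_bound hμ1 hx n]) (by positivity : (0 : ℝ) ≤ n + 1)

lemma one_le_deriv_fA_one (hμ1 : 1 ≤ μ 1) {x : ℝ} (hx : 1 ≤ x) : 1 ≤ deriv (fA μ 1) x := by
  simpa [deriv_fA_zero] using deriv_fA_succ_bound hμ1 hx 0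

end fA

theorem stmt_5_general (μ : ℕ → ℕ) (hμ1 : 1 ≤ μ 1) (n : ℕ) (hn : 1 ≤ n) (x : ℝ) (hx : 1 ≤ x) :
    1 ≤ deriv (fA μ n) x ∧ deriv (fA μ n) x < deriv (fA μ (n + 1)) x := by
  have hmono := strictMono_deriv_fA hμ1 hx
  exact ⟨(one_le_deriv_fA_one hμ1 hx).trans (hmono.monotone hn), hmono n.lt_succ_self⟩

/-- If 1 is in A then for every n >= 1 and real x >= 1, 1 <= f_{A,n}'(x) < f_{A,n+1}'(x). -/
theorem stmt_5 (μ : ℕ → ℕ) (hμ0 : μ 0 = 0) (hμ1 : 1 ≤ μ 1) (n : ℕ) (hn : 1 ≤ n) (x : ℝ) (hx : 1 ≤ x) :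
    1 ≤ deriv (fA μ n) x ∧ deriv (fA μ n) x < deriv (fA μ (n + 1)) x :=
  stmt_5_general μ hμ1 n hn x hx
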